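/- Let f : A ⟶ P and g : B ⟶ P be morphisms of cochain complexes in an abelian category, with A, B, P concentrated in degrees -2, -1, 0. If f and g are quasi-isomorphisms in degree -2 cohomology H^{-2} (i.e. H^{-2}(f) and H^{-2}(g) are isomorphisms), then the natural map H^{-2}(τ_{≤0}(MC(f-g)[-1])) → H^{-2}(A) induced by the projection is injective. -/

import Mathlib

open CategoryTheory Category Limits ZeroObject

namespace PaperExt

variable {𝒜 : Type*} [Category 𝒜] [Abelian 𝒜]

/-- Components of the good truncation `τ_{≤0}`. -/
noncomputable def tLEX (X : CochainComplex 𝒜 ℤ) : ℤ → 𝒜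
  | .ofNat 0 => kernel (X.d 0 1)
  | .ofNat (_+1) => 0
  | .negSucc n => X.X (.negSucc n)

/-- Differentials of the good truncation `τ_{≤0}`. -/
noncomputable def tLEd (X : CochainComplex 𝒜 ℤ) :
    ∀ i j : ℤ, tLEX X i ⟶ tLEX X j
  | .negSucc 0, .ofNat 0 =>
      kernel.lift (X.d 0 1) (X.d (.negSucc 0) (.ofNat 0)) (X.d_comp_d _ _ _)
  | .negSucc a, .negSucc b => X.d (.negSucc a) (.negSucc b)
  | _, _ => 0

lemma tLEd_ofNat (X : CochainComplex 𝒜 ℤ) (a : ℕ) (j : ℤ) :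
    tLEd X (.ofNat a) j = 0 := by cases j <;> rfl

lemma tLEd_negSucc_negSucc (X : CochainComplex 𝒜 ℤ) (a b : ℕ) :
    tLEd X (.negSucc a) (.negSucc b) = X.d (.negSucc a) (.negSucc b) := by
  cases a <;> rfl

lemma tLEd_neg_one_zero (X : CochainComplex 𝒜 ℤ) :
    tLEd X (.negSucc 0) (.ofNat 0) =
      kernel.lift (X.d 0 1) (X.d (.negSucc 0) (.ofNat 0)) (X.d_comp_d _ _ _) := rfl

lemma tLEd_negSucc_ofNat_succ (X : CochainComplex 𝒜 ℤ) (a b : ℕ) :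
    tLEd X (.negSucc a) (.ofNat (b+1)) = 0 := by cases a <;> rfl

lemma tLEd_negSucc_succ_ofNat (X : CochainComplex 𝒜 ℤ) (a b : ℕ) :
    tLEd X (.negSucc (a+1)) (.ofNat b) = 0 := by cases b <;> rfl

/-- The good truncation `τ_{≤0}` of a cochain complex. -/
noncomputable def truncLE0 (X : CochainComplex 𝒜 ℤ) : CochainComplex 𝒜 ℤ where
  X := tLEX X
  d := tLEd X
  shape i j hij := by
    simp only [ComplexShape.up_Rel] at hij
    match i, j with
    | .ofNat a, j => exact tLEd_ofNat X a j
    | .negSucc 0, .ofNat 0 => exact absurd rfl hij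
    | .negSucc a, .ofNat (b+1) => exact tLEd_negSucc_ofNat_succ X a b
    | .negSucc (a+1), .ofNat 0 => exact tLEd_negSucc_succ_ofNat X a 0
    | .negSucc a, .negSucc b =>
        rw [tLEd_negSucc_negSucc]
        exact X.shape _ _ hij
  d_comp_d' i j k _ _ := by
    match i, j, k with
    | .ofNat a, j, k => rw [tLEd_ofNat, zero_comp]
    | .negSucc a, .ofNat b, k => rw [tLEd_ofNat, comp_zero]
    | .negSucc a, .negSucc b, .negSucc c =>
        rw [tLEd_negSucc_negSucc, tLEd_negSucc_negSucc]
        exact X.d_comp_d _ _ _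
    | .negSucc a, .negSucc 0, .ofNat 0 =>
        rw [tLEd_negSucc_negSucc, tLEd_neg_one_zero]
        change X.d (.negSucc a) (.negSucc 0) ≫
          kernel.lift (X.d 0 1) (X.d (.negSucc 0) (.ofNat 0)) (X.d_comp_d _ _ _) = 0
        rw [← cancel_mono (kernel.ι (X.d 0 1)), assoc, kernel.lift_ι, zero_comp]
        exact X.d_comp_d _ _ _
    | .negSucc a, .negSucc b, .ofNat (c+1) =>
        rw [tLEd_negSucc_ofNat_succ, comp_zero]
    | .negSucc a, .negSucc (b+1), .ofNat 0 =>
        rw [tLEd_negSucc_succ_ofNat, comp_zero]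

/-- The components of the canonical map `τ_{≤0} X ⟶ X`. -/
noncomputable def tLEι (X : CochainComplex 𝒜 ℤ) : ∀ i : ℤ, tLEX X i ⟶ X.X i
  | .ofNat 0 => kernel.ι (X.d 0 1)
  | .ofNat (_+1) => 0
  | .negSucc _ => 𝟙 _

lemma tLEι_zero (X : CochainComplex 𝒜 ℤ) : tLEι X (.ofNat 0) = kernel.ι (X.d 0 1) := rfl
lemma tLEι_negSucc (X : CochainComplex 𝒜 ℤ) (n : ℕ) : tLEι X (.negSucc n) = 𝟙 _ := rfl
lemma tLEι_pos (X : CochainComplex 𝒜 ℤ) (n : ℕ) : tLEι X (.ofNat (n+1)) = 0 := rfl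

/-- The canonical map `τ_{≤0} X ⟶ X`. -/
noncomputable def truncLE0ι (X : CochainComplex 𝒜 ℤ) : truncLE0 X ⟶ X where
  f := tLEι X
  comm' i j hij := by
    simp only [ComplexShape.up_Rel] at hij
    show tLEι X i ≫ X.d i j = tLEd X i j ≫ tLEι X j
    match i, j with
    | .ofNat 0, .ofNat (b+1) =>
        obtain rfl : b = 0 := by simp only [Int.ofNat_eq_natCast] at hij; omega
        rw [tLEι_zero, tLEd_ofNat, zero_comp]
        exact kernel.condition _
    | .ofNat 0, .ofNat 0 =>
        exact absurd hij (by simp only [Int.ofNat_eq_natCast] at *; omega)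
    | .ofNat 0, .negSucc b =>
        exact absurd hij (by simp only [Int.negSucc_eq, Int.ofNat_eq_natCast] at *; omega)
    | .ofNat (a+1), j =>
        rw [tLEι_pos, tLEd_ofNat, zero_comp, zero_comp]
    | .negSucc 0, .ofNat 0 =>
        rw [tLEι_negSucc, tLEι_zero, tLEd_neg_one_zero]
        exact (id_comp _).trans (kernel.lift_ι _ _ _).symm
    | .negSucc a, .ofNat (b+1) =>
        exact absurd hij (by simp only [Int.negSucc_eq, Int.ofNat_eq_natCast] at *; omega)
    | .negSucc (a+1), .ofNat 0 =>
        exact absurd hij (by simp only [Int.negSucc_eq, Int.ofNat_eq_natCast] at *; omega)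
    | .negSucc a, .negSucc b =>
        rw [tLEι_negSucc, tLEι_negSucc, tLEd_negSucc_negSucc]
        exact (id_comp _).trans (comp_id _).symm

/-- Components of the good truncation `τ_{≥-2}`. -/
noncomputable def tGEX (X : CochainComplex 𝒜 ℤ) : ℤ → 𝒜
  | .ofNat n => X.X (.ofNat n)
  | .negSucc 0 => X.X (.negSucc 0)
  | .negSucc 1 => cokernel (X.d (.negSucc 2) (.negSucc 1))
  | .negSucc (_+2) => 0

/-- Differentials of the good truncation `τ_{≥-2}`. -/
noncomputable def tGEd (X : CochainComplex 𝒜 ℤ) :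
    ∀ i j : ℤ, tGEX X i ⟶ tGEX X j
  | .negSucc 1, .negSucc 0 =>
      cokernel.desc (X.d (.negSucc 2) (.negSucc 1)) (X.d (.negSucc 1) (.negSucc 0))
        (X.d_comp_d _ _ _)
  | .negSucc 0, .ofNat m => X.d (.negSucc 0) (.ofNat m)
  | .ofNat n, .ofNat m => X.d (.ofNat n) (.ofNat m)
  | _, _ => 0

lemma tGEd_ofNat_ofNat (X : CochainComplex 𝒜 ℤ) (n m : ℕ) :
    tGEd X (.ofNat n) (.ofNat m) = X.d (.ofNat n) (.ofNat m) := rfl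
lemma tGEd_neg_one_ofNat (X : CochainComplex 𝒜 ℤ) (m : ℕ) :
    tGEd X (.negSucc 0) (.ofNat m) = X.d (.negSucc 0) (.ofNat m) := rfl
lemma tGEd_neg_two_neg_one (X : CochainComplex 𝒜 ℤ) :
    tGEd X (.negSucc 1) (.negSucc 0) =
      cokernel.desc (X.d (.negSucc 2) (.negSucc 1)) (X.d (.negSucc 1) (.negSucc 0))
        (X.d_comp_d _ _ _) := rfl
lemma tGEd_ofNat_negSucc (X : CochainComplex 𝒜 ℤ) (n m : ℕ) :
    tGEd X (.ofNat n) (.negSucc m) = 0 := rfl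
lemma tGEd_neg_one_negSucc (X : CochainComplex 𝒜 ℤ) (m : ℕ) :
    tGEd X (.negSucc 0) (.negSucc m) = 0 := by cases m <;> rfl
lemma tGEd_neg_two_negSucc_succ (X : CochainComplex 𝒜 ℤ) (m : ℕ) :
    tGEd X (.negSucc 1) (.negSucc (m+1)) = 0 := by cases m <;> rfl
lemma tGEd_neg_two_ofNat (X : CochainComplex 𝒜 ℤ) (m : ℕ) :
    tGEd X (.negSucc 1) (.ofNat m) = 0 := by cases m <;> rfl
lemma tGEd_low (X : CochainComplex 𝒜 ℤ) (n : ℕ) (j : ℤ) :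
    tGEd X (.negSucc (n+2)) j = 0 := by
  cases j with
  | ofNat m => cases m <;> rfl
  | negSucc m => cases m with | zero => rfl | succ m => cases m <;> rfl

/-- The good truncation `τ_{≥-2}` of a cochain complex. -/
noncomputable def truncGEm2 (X : CochainComplex 𝒜 ℤ) : CochainComplex 𝒜 ℤ where
  X := tGEX X
  d := tGEd X
  shape i j hij := by
    simp only [ComplexShape.up_Rel] at hij
    match i, j with
    | .negSucc 1, .negSucc 0 => exact absurd rfl hij
    | .negSucc 0, .ofNat m => rw [tGEd_neg_one_ofNat]; exact X.shape _ _ hij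
    | .ofNat n, .ofNat m => rw [tGEd_ofNat_ofNat]; exact X.shape _ _ hij
    | .ofNat n, .negSucc m => exact tGEd_ofNat_negSucc X n m
    | .negSucc 0, .negSucc m => exact tGEd_neg_one_negSucc X m
    | .negSucc 1, .negSucc (m+1) => exact tGEd_neg_two_negSucc_succ X m
    | .negSucc 1, .ofNat m => exact tGEd_neg_two_ofNat X m
    | .negSucc (n+2), j => exact tGEd_low X n j
  d_comp_d' i j k _ _ := by
    match i, j, k with
    | .negSucc 1, .negSucc 0, .ofNat m =>
        rw [tGEd_neg_two_neg_one, tGEd_neg_one_ofNat]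
        change cokernel.desc (X.d (.negSucc 2) (.negSucc 1)) (X.d (.negSucc 1) (.negSucc 0))
          (X.d_comp_d _ _ _) ≫ X.d (.negSucc 0) (.ofNat m) = 0
        rw [← cancel_epi (cokernel.π (X.d (.negSucc 2) (.negSucc 1))), cokernel.π_desc_assoc,
          X.d_comp_d, comp_zero]
    | .negSucc 1, .negSucc 0, .negSucc m =>
        rw [tGEd_neg_one_negSucc, comp_zero]
    | .negSucc 0, .ofNat m, .ofNat p =>
        rw [tGEd_neg_one_ofNat, tGEd_ofNat_ofNat]; exact X.d_comp_d _ _ _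
    | .negSucc 0, .ofNat m, .negSucc p =>
        rw [tGEd_ofNat_negSucc, comp_zero]
    | .ofNat n, .ofNat m, .ofNat p =>
        rw [tGEd_ofNat_ofNat, tGEd_ofNat_ofNat]; exact X.d_comp_d _ _ _
    | .ofNat n, .ofNat m, .negSucc p =>
        rw [tGEd_ofNat_negSucc, comp_zero]
    | .ofNat n, .negSucc m, k =>
        rw [tGEd_ofNat_negSucc, zero_comp]
    | .negSucc 0, .negSucc m, k =>
        rw [tGEd_neg_one_negSucc, zero_comp]
    | .negSucc 1, .negSucc (m+1), k =>
        rw [tGEd_neg_two_negSucc_succ, zero_comp]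
    | .negSucc 1, .ofNat m, k =>
        rw [tGEd_neg_two_ofNat, zero_comp]
    | .negSucc (n+2), j, k =>
        rw [tGEd_low, zero_comp]

/-- The components of the canonical map `X ⟶ τ_{≥-2} X`. -/
noncomputable def tGEπ (X : CochainComplex 𝒜 ℤ) : ∀ i : ℤ, X.X i ⟶ tGEX X i
  | .ofNat _ => 𝟙 _
  | .negSucc 0 => 𝟙 _
  | .negSucc 1 => cokernel.π (X.d (.negSucc 2) (.negSucc 1))
  | .negSucc (_+2) => 0

lemma tGEπ_ofNat (X : CochainComplex 𝒜 ℤ) (n : ℕ) : tGEπ X (.ofNat n) = 𝟙 _ := rfl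
lemma tGEπ_neg_one (X : CochainComplex 𝒜 ℤ) : tGEπ X (.negSucc 0) = 𝟙 _ := rfl
lemma tGEπ_neg_two (X : CochainComplex 𝒜 ℤ) :
    tGEπ X (.negSucc 1) = cokernel.π (X.d (.negSucc 2) (.negSucc 1)) := rfl
lemma tGEπ_low (X : CochainComplex 𝒜 ℤ) (n : ℕ) : tGEπ X (.negSucc (n+2)) = 0 := rfl

/-- The canonical map `X ⟶ τ_{≥-2} X`. -/
noncomputable def truncGEm2π (X : CochainComplex 𝒜 ℤ) : X ⟶ truncGEm2 X where
  f := tGEπ X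
  comm' i j hij := by
    simp only [ComplexShape.up_Rel] at hij
    show tGEπ X i ≫ tGEd X i j = X.d i j ≫ tGEπ X j
    match i, j with
    | .ofNat n, .ofNat m =>
        rw [tGEπ_ofNat, tGEπ_ofNat, tGEd_ofNat_ofNat]
        exact (id_comp _).trans (comp_id _).symm
    | .ofNat n, .negSucc m =>
        exact absurd hij (by simp only [Int.negSucc_eq, Int.ofNat_eq_natCast] at *; omega)
    | .negSucc 0, .ofNat m =>
        rw [tGEπ_neg_one, tGEπ_ofNat, tGEd_neg_one_ofNat]
        exact (id_comp _).trans (comp_id _).symm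
    | .negSucc 0, .negSucc m =>
        exact absurd hij (by simp only [Int.negSucc_eq] at *; omega)
    | .negSucc 1, .ofNat m =>
        exact absurd hij (by simp only [Int.negSucc_eq, Int.ofNat_eq_natCast] at *; omega)
    | .negSucc 1, .negSucc 0 =>
        rw [tGEπ_neg_two, tGEπ_neg_one, tGEd_neg_two_neg_one]
        exact (cokernel.π_desc _ _ _).trans (comp_id _).symm
    | .negSucc 1, .negSucc (m+1) =>
        exact absurd hij (by simp only [Int.negSucc_eq] at *; omega)
    | .negSucc 2, .negSucc m =>
        obtain rfl : m = 1 := by simp only [Int.negSucc_eq] at hij; omega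
        rw [tGEπ_low, tGEπ_neg_two, zero_comp]
        exact (cokernel.condition _).symm
    | .negSucc (n+3), .negSucc m =>
        obtain rfl : m = n + 2 := by simp only [Int.negSucc_eq] at hij; omega
        rw [tGEπ_low, tGEπ_low, zero_comp, comp_zero]
    | .negSucc (n+2), .ofNat m =>
        exact absurd hij (by simp only [Int.negSucc_eq, Int.ofNat_eq_natCast] at *; omega)


/-- The fibered product of length-3 complexes: `A ×_P B := τ_{≤0}(MC(f-g)[-1])`. -/
noncomputable def fibProd {A B P : CochainComplex 𝒜 ℤ} (f : A ⟶ P) (g : B ⟶ P) :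
    CochainComplex 𝒜 ℤ :=
  truncLE0 ((CochainComplex.mappingCone (biprod.desc f (-g)))⟦(-1 : ℤ)⟧)

/-- The canonical projection `pr₁ : A ×_P B ⟶ A`. -/
noncomputable def fibProdPr₁ {A B P : CochainComplex 𝒜 ℤ} (f : A ⟶ P) (g : B ⟶ P) :
    fibProd f g ⟶ A :=
  truncLE0ι _ ≫
    ((CochainComplex.mappingCone.triangle (biprod.desc f (-g))).mor₃)⟦(-1 : ℤ)⟧' ≫
    (shiftFunctorCompIsoId (CochainComplex 𝒜 ℤ) (1 : ℤ) (-1 : ℤ) (by omega)).hom.app (A ⊞ B) ≫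
    biprod.fst

section Stmt10Aux

open HomologicalComplex

variable {𝒜 : Type*} [Category 𝒜] [Abelian 𝒜]

/-- `homologyMap` expressed through the homotopy category homology functor. -/
lemma homologyMap_eq_via_homotopy {X Y : CochainComplex 𝒜 ℤ} (ψ : X ⟶ Y) (n : ℤ) :
    homologyMap ψ n =
      (HomotopyCategory.homologyFunctorFactors 𝒜 (ComplexShape.up ℤ) n).inv.app X ≫
      (HomotopyCategory.homologyFunctor 𝒜 (ComplexShape.up ℤ) n).map
        ((HomotopyCategory.quotient 𝒜 (ComplexShape.up ℤ)).map ψ) ≫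
      (HomotopyCategory.homologyFunctorFactors 𝒜 (ComplexShape.up ℤ) n).hom.app Y :=
  (NatIso.naturality_1 (HomotopyCategory.homologyFunctorFactors 𝒜 (ComplexShape.up ℤ) n) ψ).symm

lemma isIso_homologyMap_truncLE0ι_neg_two (X : CochainComplex 𝒜 ℤ) :
    IsIso (homologyMap (truncLE0ι X) (-2)) := by
  have key : ∀ i : ℤ, i < 0 → IsIso ((truncLE0ι X).f i) := by
    intro i hi
    match i with
    | .negSucc k =>
        have : (truncLE0ι X).f (Int.negSucc k) = 𝟙 _ := tLEι_negSucc X k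
        rw [this]; exact IsIso.id _
    | .ofNat k => exact absurd hi (by rw [Int.ofNat_eq_natCast]; omega)
  have h1 := key ((ComplexShape.up ℤ).prev (-2)) (by rw [CochainComplex.prev]; norm_num)
  have h2 := key (-2) (by norm_num)
  have h3 := key ((ComplexShape.up ℤ).next (-2)) (by rw [CochainComplex.next]; norm_num)
  have : IsIso ((shortComplexFunctor 𝒜 (ComplexShape.up ℤ) (-2)).map (truncLE0ι X)) := by
    exact @ShortComplex.isIso_of_isIso _ _ _ _ _ _ h1 h2 h3
  exact (inferInstance : IsIso (ShortComplex.homologyMap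
    ((shortComplexFunctor 𝒜 (ComplexShape.up ℤ) (-2)).map (truncLE0ι X))))

end Stmt10Aux

end PaperExt

open PaperExt HomologicalComplex

/-- if `f : A ⟶ P` and `g : B ⟶ P` (complexes concentrated in degrees
`-2,-1,0`) induce isomorphisms on `H⁻²`, then the map
`H⁻²(A ×_P B) ⟶ H⁻²(A)` induced by the projection is injective (a monomorphism). -/
theorem stmt10 {𝒜 : Type*} [CategoryTheory.Category 𝒜] [CategoryTheory.Abelian 𝒜]
    (A B P : CochainComplex 𝒜 ℤ)
    (hA : ∀ i : ℤ, i ≠ -2 → i ≠ -1 → i ≠ 0 → CategoryTheory.Limits.IsZero (A.X i))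
    (hB : ∀ i : ℤ, i ≠ -2 → i ≠ -1 → i ≠ 0 → CategoryTheory.Limits.IsZero (B.X i))
    (hP : ∀ i : ℤ, i ≠ -2 → i ≠ -1 → i ≠ 0 → CategoryTheory.Limits.IsZero (P.X i))
    (f : A ⟶ P) (g : B ⟶ P)
    (hf : CategoryTheory.IsIso (homologyMap f (-2)))
    (hg : CategoryTheory.IsIso (homologyMap g (-2))) :
    CategoryTheory.Mono (homologyMap (fibProdPr₁ f g) (-2)) := by
  let φ : A ⊞ B ⟶ P := biprod.desc f (-g)
  let MC := CochainComplex.mappingCone φ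
  let m3 := (CochainComplex.mappingCone.triangle φ).mor₃
  let Q := HomotopyCategory.quotient 𝒜 (ComplexShape.up ℤ)
  let F3 := HomotopyCategory.homologyFunctor 𝒜 (ComplexShape.up ℤ) (-3)
  -- Step 1 : `H⁻³(P) = 0`
  have hP3 : IsZero (P.homology (-3)) := by
    rw [← HomologicalComplex.exactAt_iff_isZero_homology]
    exact ShortComplex.exact_of_isZero_X₂ (S := P.sc (-3))
      (hP (-3) (by norm_num) (by norm_num) (by norm_num))
  -- Step 2 : `H⁻³(mor₃)` is mono
  have hdist := HomotopyCategory.mappingCone_triangleh_distinguished φ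
  have hex := F3.map_distinguished_exact _ (Pretriangulated.rot_of_distTriang _ hdist)
  have hz : IsZero (F3.obj (Q.obj P)) :=
    IsZero.of_iso hP3
      ((HomotopyCategory.homologyFunctorFactors 𝒜 (ComplexShape.up ℤ) (-3)).app P)
  have hmono0 : Mono (F3.map ((CochainComplex.mappingCone.triangleh φ).rotate.mor₂)) :=
    hex.mono_g (hz.eq_of_src _ _)
  have hmono1 : Mono (F3.map (Q.map m3)) := by
    have heq : Mono (F3.map (Q.map m3) ≫ F3.map ((Q.commShiftIso (1 : ℤ)).hom.app (A ⊞ B))) :=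
      (F3.map_comp (Q.map m3) ((Q.commShiftIso (1 : ℤ)).hom.app (A ⊞ B))) ▸ hmono0
    exact @mono_of_mono _ _ _ _ _ _ _ heq
  have hmono2 : Mono (homologyMap m3 (-3)) := by
    rw [homologyMap_eq_via_homotopy]
    haveI := hmono1
    exact mono_comp' (inferInstance : Mono ((HomotopyCategory.homologyFunctorFactors 𝒜 (ComplexShape.up ℤ) (-3)).inv.app _))
      (mono_comp' hmono1 (inferInstance : Mono ((HomotopyCategory.homologyFunctorFactors 𝒜 (ComplexShape.up ℤ) (-3)).hom.app _)))
  -- Step 3 : `mor₃ ≫ φ⟦1⟧'` is zero in the homotopy category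
  have hQzero : Q.map (m3 ≫ φ⟦(1 : ℤ)⟧') = 0 := by
    have h31 := Pretriangulated.comp_distTriang_mor_zero₃₁ _ hdist
    have hnat := (Q.commShiftIso (1 : ℤ)).hom.naturality φ
    dsimp only [Functor.comp_map] at hnat
    rw [← cancel_mono ((Q.commShiftIso (1 : ℤ)).hom.app P), zero_comp, Q.map_comp, assoc]
    erw [hnat, ← assoc]
    exact h31
  have hzero3 : homologyMap (m3 ≫ φ⟦(1 : ℤ)⟧') (-3) = 0 := by
    rw [homologyMap_eq_via_homotopy, hQzero, Functor.map_zero, zero_comp, comp_zero]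
    rfl
  -- Step 4 : transfer along the shift `⟦-1⟧`
  let e := CochainComplex.ShiftSequence.shiftIso 𝒜 (-1 : ℤ) (-2) (-3) (by norm_num)
  have hshift : ∀ {X Y : CochainComplex 𝒜 ℤ} (ψ : X ⟶ Y),
      homologyMap (ψ⟦(-1 : ℤ)⟧') (-2) = e.hom.app X ≫ homologyMap ψ (-3) ≫ e.inv.app Y := by
    intro X Y ψ
    have h : homologyMap (ψ⟦(-1 : ℤ)⟧') (-2) ≫ e.hom.app Y =
        e.hom.app X ≫ homologyMap ψ (-3) := e.hom.naturality ψ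
    erw [← assoc, ← h]
    erw [assoc, Iso.hom_inv_id_app, comp_id]
  have hmono3 : Mono (homologyMap (m3⟦(-1 : ℤ)⟧') (-2)) := by
    rw [hshift m3]
    exact mono_comp' (inferInstance : Mono (e.hom.app _)) (mono_comp' hmono2 (inferInstance : Mono (e.inv.app _)))
  have hzero4 : homologyMap ((m3 ≫ φ⟦(1 : ℤ)⟧')⟦(-1 : ℤ)⟧') (-2) = 0 := by
    rw [hshift, hzero3]; erw [zero_comp, comp_zero]; rfl
  -- Step 5 : set up `v : H⁻²(MC⟦-1⟧) ⟶ H⁻²(A ⊞ B)`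
  let unit := shiftFunctorCompIsoId (CochainComplex 𝒜 ℤ) (1 : ℤ) (-1 : ℤ) (by omega)
  haveI : IsIso (homologyMap (unit.hom.app (A ⊞ B)) (-2)) := by
    change IsIso ((HomologicalComplex.homologyFunctor 𝒜 (ComplexShape.up ℤ) (-2)).map
      (unit.hom.app (A ⊞ B)))
    infer_instance
  set v : ((MC)⟦(-1 : ℤ)⟧).homology (-2) ⟶ (A ⊞ B).homology (-2) :=
    homologyMap (m3⟦(-1 : ℤ)⟧') (-2) ≫ homologyMap (unit.hom.app (A ⊞ B)) (-2) with hv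
  haveI hvmono : Mono v := by
    rw [hv]
    exact mono_comp' hmono3 (inferInstance : Mono (homologyMap (unit.hom.app (A ⊞ B)) (-2)))
  have hvφ : v ≫ homologyMap φ (-2) = 0 := by
    have hnatunit : (m3⟦(-1 : ℤ)⟧') ≫ unit.hom.app (A ⊞ B) ≫ φ =
        ((m3 ≫ φ⟦(1 : ℤ)⟧')⟦(-1 : ℤ)⟧') ≫ unit.hom.app P := by
      rw [Functor.map_comp, assoc]
      congr 1
      exact (unit.hom.naturality φ).symm
    erw [hv, assoc, ← homologyMap_comp, ← homologyMap_comp, hnatunit, homologyMap_comp,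
      hzero4, zero_comp]
    rfl
  have hφdec : homologyMap φ (-2) =
      homologyMap (biprod.fst : A ⊞ B ⟶ A) (-2) ≫ homologyMap f (-2)
      - homologyMap (biprod.snd : A ⊞ B ⟶ B) (-2) ≫ homologyMap g (-2) := by
    rw [show φ = biprod.fst ≫ f + biprod.snd ≫ (-g) from biprod.desc_eq]
    rw [homologyMap_add, homologyMap_comp, homologyMap_comp, homologyMap_neg]
    simp [sub_eq_add_neg]
  have htotal : homologyMap (biprod.fst : A ⊞ B ⟶ A) (-2) ≫
        homologyMap (biprod.inl : A ⟶ A ⊞ B) (-2)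
      + homologyMap (biprod.snd : A ⊞ B ⟶ B) (-2) ≫
        homologyMap (biprod.inr : B ⟶ A ⊞ B) (-2) = 𝟙 _ := by
    rw [← homologyMap_comp, ← homologyMap_comp, ← homologyMap_add, biprod.total,
      homologyMap_id]
  -- Step 6 : conclude
  have hrest : Mono (homologyMap (m3⟦(-1 : ℤ)⟧') (-2) ≫
      homologyMap (unit.hom.app (A ⊞ B)) (-2) ≫
      homologyMap (biprod.fst : A ⊞ B ⟶ A) (-2)) := by
    rw [Preadditive.mono_iff_cancel_zero]
    intro Z t ht
    have ht1 : (t ≫ v) ≫ homologyMap (biprod.fst : A ⊞ B ⟶ A) (-2) = 0 := by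
      erw [hv, assoc, assoc]; exact ht
    have h0 : (t ≫ v) ≫ homologyMap φ (-2) = 0 := by
      erw [assoc, hvφ, comp_zero]
    rw [hφdec, Preadditive.comp_sub, ← assoc, ht1, zero_comp, zero_sub, neg_eq_zero,
      ← assoc] at h0
    have ht2 : (t ≫ v) ≫ homologyMap (biprod.snd : A ⊞ B ⟶ B) (-2) = 0 := by
      haveI := hg
      rw [← cancel_mono (homologyMap g (-2)), zero_comp, assoc]
      rw [← assoc]
      exact h0
    have htv : t ≫ v = 0 := by
      have := congrArg (fun x => (t ≫ v) ≫ x) htotal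
      simpa only [Preadditive.comp_add, comp_id, ← assoc, ht1, ht2, zero_comp,
        add_zero] using this.symm
    exact @zero_of_comp_mono _ _ _ _ _ _ _ v hvmono htv
  have hdecomp : homologyMap (fibProdPr₁ f g) (-2) =
      homologyMap (truncLE0ι ((MC)⟦(-1 : ℤ)⟧)) (-2) ≫
      (homologyMap (m3⟦(-1 : ℤ)⟧') (-2) ≫
        homologyMap (unit.hom.app (A ⊞ B)) (-2) ≫
        homologyMap (biprod.fst : A ⊞ B ⟶ A) (-2)) := by
    rw [show fibProdPr₁ f g =
        truncLE0ι ((MC)⟦(-1 : ℤ)⟧) ≫ (m3⟦(-1 : ℤ)⟧') ≫ unit.hom.app (A ⊞ B) ≫ biprod.fst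
      from rfl]
    erw [homologyMap_comp, homologyMap_comp, homologyMap_comp]
    rfl
  haveI := isIso_homologyMap_truncLE0ι_neg_two ((MC)⟦(-1 : ℤ)⟧)
  rw [hdecomp]
  exact mono_comp' (inferInstance : Mono (homologyMap (truncLE0ι ((MC)⟦(-1 : ℤ)⟧)) (-2))) hrest
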